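/- With d_k(u,v,n) as above, the recurrence d_{(2k+3)_{a²}}(u,v,n) = d_{(2k+2)_a}(u,v,n) + d_{(2k)_a}(u−2, v, n−2k−3) + d_{(2k−1)_a}(u−2, v−1, n−4k−3) holds for all u,v ∈ ℕ and k,n ≥ 1. -/

import Mathlib

/-- The five colours a, b, ab, a², b². -/
inductive Col where
  | a | b | ab | aa | bb
deriving DecidableEq, Inhabited

open Col

/-- Position of a coloured integer in the ordering
1_{ab} < 1_a < 1_{b²} < 1_b < 2_{ab} < 2_a < 3_{a²} < 2_b < 3_{ab} < ⋯ . -/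
def colPos : ℕ × Col → ℕ
  | (k, Col.ab) => 4 * k - 4
  | (k, Col.a)  => 4 * k - 3
  | (k, Col.bb) => 4 * k - 2
  | (k, Col.b)  => 4 * k - 1
  | (k, Col.aa) => 4 * k - 6

/-- Entry of the matrix A: minimal gap below a part of size `k` and colour `x`,
above a part of colour `y`. -/
def colMinGap (k : ℕ) (x y : Col) : ℕ :=
  match x, y with
  | Col.a, y => if k % 2 = 1 then
      (match y with | Col.ab => 1 | _ => 2)
    else
      (match y with | Col.aa => 3 | Col.bb => 3 | _ => 2)
  | Col.bb, y => (match y with | Col.b => 3 | Col.bb => 4 | _ => 2)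
  | Col.b, y => if k % 2 = 1 then
      (match y with | Col.a => 1 | Col.ab => 1 | _ => 2)
    else
      (match y with | Col.a => 1 | Col.ab => 1 | Col.aa => 1 | Col.bb => 3 | _ => 2)
  | Col.ab, y => if k % 2 = 0 then
      (match y with | Col.aa => 3 | Col.bb => 3 | _ => 2)
    else
      (match y with | Col.b => 3 | Col.bb => 3 | _ => 2)
  | Col.aa, y => (match y with | Col.aa => 4 | Col.bb => 4 | _ => 3)

/-- A coloured partition as in the non-dilated Siladić theorem: parts are coloured
positive integers, squared colours only occur on odd integers, there is no part
1_{ab} or 1_{b²}, and consecutive parts satisfy the gap conditions of matrix A. -/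
def IsColPartition (l : List (ℕ × Col)) : Prop :=
  (∀ p ∈ l, 1 ≤ p.1 ∧ ((p.2 = Col.aa ∨ p.2 = Col.bb) → p.1 % 2 = 1) ∧
    p ≠ (1, Col.ab) ∧ p ≠ (1, Col.bb)) ∧
  ∀ i, i + 1 < l.length →
    l[i]!.1 ≥ l[i+1]!.1 + colMinGap l[i]!.1 l[i]!.2 l[i+1]!.2

/-- Number of parts coloured a or ab, plus twice the number of parts coloured a². -/
def aCt (l : List (ℕ × Col)) : ℕ :=
  (l.countP fun p => p.2 == Col.a || p.2 == Col.ab) +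
    2 * (l.countP fun p => p.2 == Col.aa)

/-- Number of parts coloured b or ab, plus twice the number of parts coloured b². -/
def bCt (l : List (ℕ × Col)) : ℕ :=
  (l.countP fun p => p.2 == Col.b || p.2 == Col.ab) +
    2 * (l.countP fun p => p.2 == Col.bb)

/-- D(u,v,n): coloured partitions of n with a-count u and b-count v. -/
noncomputable def Dct (u v n : ℕ) : ℕ :=
  Nat.card {l : List (ℕ × Col) // IsColPartition l ∧
    (l.map Prod.fst).sum = n ∧ aCt l = u ∧ bCt l = v}

/-- d_K(u,v,n): as D(u,v,n) but with largest part at most K in the coloured order;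
integer arguments (negative values give 0). -/
noncomputable def dct (K : ℕ × Col) (u v n : ℤ) : ℕ :=
  Nat.card {l : List (ℕ × Col) // IsColPartition l ∧
    (∀ p ∈ l, colPos p ≤ colPos K) ∧
    ((l.map Prod.fst).sum : ℤ) = n ∧ (aCt l : ℤ) = u ∧ (bCt l : ℤ) = v}

/-- e_K(u,v,n): as d_K(u,v,n) but with largest part exactly K. -/
noncomputable def ect (K : ℕ × Col) (u v n : ℤ) : ℕ :=
  Nat.card {l : List (ℕ × Col) // IsColPartition l ∧
    (∀ p ∈ l, colPos p ≤ colPos K) ∧ l ≠ [] ∧ l.head! = K ∧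
    ((l.map Prod.fst).sum : ℤ) = n ∧ (aCt l : ℤ) = u ∧ (bCt l : ℤ) = v}

/-- The generating function G_K(a,b,q) = 1 + ∑_{u,v≥0,n≥1} d_K(u,v,n) aᵘbᵛqⁿ,
as a formal power series in the variables a = X 0, b = X 1, q = X 2. -/
noncomputable def Gf (K : ℕ × Col) : MvPowerSeries (Fin 3) ℚ :=
  fun e => (dct K (e 0) (e 1) (e 2) : ℚ)

/-!
A partition counted by `d_{(2k+3)_{a²}}` either has largest part at most `(2k+2)_a`, or starts
with `(2k+3)_{a²}`. In the latter case the gap conditions force the next part to be `(2k)_b` or at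
most `(2k)_a`, and after `(2k)_b` they force the following part to be at most `(2k-1)_a`; removing
these leading parts gives the other two terms. Since `colPos` strictly decreases along a coloured
partition, a bound on the largest part is a condition on the head of the list alone.
-/

instance : Fintype Col :=
  ⟨{Col.a, Col.b, Col.ab, Col.aa, Col.bb}, fun x => by cases x <;> simp⟩

def IsColPart (p : ℕ × Col) : Prop :=
  1 ≤ p.1 ∧ ((p.2 = Col.aa ∨ p.2 = Col.bb) → p.1 % 2 = 1) ∧
    p ≠ (1, Col.ab) ∧ p ≠ (1, Col.bb)

/-- `q` may be the part immediately after `h`. -/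
def CanFollow (q h : ℕ × Col) : Prop :=
  q.1 + colMinGap h.1 h.2 q.2 ≤ h.1

theorem isColPartition_cons_iff {h : ℕ × Col} {t : List (ℕ × Col)} :
    IsColPartition (h :: t) ↔
      IsColPart h ∧ IsColPartition t ∧ ∀ q ∈ t.head?, CanFollow q h := by
  constructor
  · rintro ⟨hparts, hgaps⟩
    refine ⟨hparts h (by simp), ⟨fun p hp => hparts p (by simp [hp]), fun i hi => ?_⟩, ?_⟩
    · simpa using hgaps (i + 1) (by simpa using hi)
    · cases t with
      | nil => simp
      | cons q t =>
        rintro _ ⟨⟩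
        simpa [CanFollow] using hgaps 0 (by simp)
  · rintro ⟨hh, ⟨hparts, hgaps⟩, hhead⟩
    refine ⟨List.forall_mem_cons.2 ⟨hh, hparts⟩, fun i hi => ?_⟩
    cases i with
    | zero =>
      cases t with
      | nil => simp at hi
      | cons q t => simpa [CanFollow] using hhead q rfl
    | succ i => simpa using hgaps i (by simpa using hi)

theorem one_le_colMinGap (k : ℕ) (x y : Col) : 1 ≤ colMinGap k x y := by
  unfold colMinGap
  cases x <;> cases y <;> split_ifs <;> decide

theorem colMinGap_aa (k : ℕ) (c : Col) :
    colMinGap k Col.aa c = if c = Col.aa ∨ c = Col.bb then 4 else 3 := by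
  cases c <;> rfl

theorem colMinGap_b_of_even {k : ℕ} (hk : k % 2 = 0) (c : Col) :
    colMinGap k Col.b c = if c = Col.bb then 3 else if c = Col.b then 2 else 1 := by
  unfold colMinGap
  cases c <;> simp [hk]

theorem colPos_lt_of_canFollow {q h : ℕ × Col} (hq : 1 ≤ q.1) (hqh : CanFollow q h) :
    colPos q < colPos h := by
  obtain ⟨m, c⟩ := q
  obtain ⟨m', c'⟩ := h
  have hgap := one_le_colMinGap m' c' c
  have hgap_aa : 3 ≤ colMinGap m' Col.aa c := by
    rw [colMinGap_aa]
    split_ifs <;> omega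
  unfold CanFollow at hqh
  cases c <;> cases c' <;> simp only [colPos] at hq hqh ⊢ <;> omega

theorem IsColPartition.colPos_lt_of_mem {h : ℕ × Col} {t : List (ℕ × Col)}
    (hl : IsColPartition (h :: t)) {p : ℕ × Col} (hp : p ∈ t) : colPos p < colPos h := by
  induction t generalizing h with
  | nil => simp at hp
  | cons q t ih =>
    obtain ⟨-, hqt, hqh⟩ := isColPartition_cons_iff.1 hl
    have hlt : colPos q < colPos h :=
      colPos_lt_of_canFollow (isColPartition_cons_iff.1 hqt).1.1 (hqh q rfl)
    rcases List.mem_cons.1 hp with rfl | hp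
    · exact hlt
    · exact (ih hqt hp).trans hlt

theorem IsColPartition.forall_colPos_le_iff {h : ℕ × Col} {t : List (ℕ × Col)}
    (hl : IsColPartition (h :: t)) (K : ℕ × Col) :
    (∀ p ∈ h :: t, colPos p ≤ colPos K) ↔ colPos h ≤ colPos K :=
  ⟨fun hle => hle h (by simp), fun hh => List.forall_mem_cons.2
    ⟨hh, fun _ hp => ((hl.colPos_lt_of_mem hp).trans_le hh).le⟩⟩

theorem aCt_cons (p : ℕ × Col) (l : List (ℕ × Col)) : aCt (p :: l) = aCt [p] + aCt l := by
  simp only [aCt, List.countP_cons, List.countP_nil]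
  ring

theorem bCt_cons (p : ℕ × Col) (l : List (ℕ × Col)) : bCt (p :: l) = bCt [p] + bCt l := by
  simp only [bCt, List.countP_cons, List.countP_nil]
  ring

theorem List.finite_setOf_sum_map_fst_eq (β : Type*) [Finite β] (m : ℕ) :
    {l : List (ℕ × β) | (∀ p ∈ l, 1 ≤ p.1) ∧ (l.map Prod.fst).sum = m}.Finite := by
  have hunzip : Function.Injective (List.unzip : List (ℕ × β) → List ℕ × List β) :=
    fun l l' h => by rw [← List.zip_unzip l, ← List.zip_unzip l', h]
  refine (((Set.finite_range (Composition.blocks (n := m))).prod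
    (List.finite_length_le β m)).preimage hunzip.injOn).subset ?_
  rintro l ⟨hpos, hsum⟩
  let c : Composition m := ⟨l.map Prod.fst, fun hi => by
    obtain ⟨p, hp, rfl⟩ := List.mem_map.1 hi
    exact hpos p hp, hsum⟩
  refine ⟨⟨c, by simp [c]⟩, ?_⟩
  simpa [c, Composition.length] using c.length_le

/-- Coloured partitions whose largest part (the head), if any, satisfies `P`. -/
def colPartitions (P : ℕ × Col → Prop) (u v n : ℤ) : Set (List (ℕ × Col)) :=
  {l | IsColPartition l ∧ (∀ q ∈ l.head?, P q) ∧
    ((l.map Prod.fst).sum : ℤ) = n ∧ (aCt l : ℤ) = u ∧ (bCt l : ℤ) = v}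

section colPartitions

variable {P Q : ℕ × Col → Prop} {u v n : ℤ}

theorem colPartitions_finite : (colPartitions P u v n).Finite :=
  (List.finite_setOf_sum_map_fst_eq Col n.toNat).subset
    fun _ ⟨hl, _, hsum, _⟩ => ⟨fun p hp => (hl.1 p hp).1, by omega⟩

theorem mem_colPartitions_congr {l : List (ℕ × Col)}
    (h : ∀ q ∈ l.head?, IsColPart q → (P q ↔ Q q)) :
    l ∈ colPartitions P u v n ↔ l ∈ colPartitions Q u v n := by
  simp only [colPartitions, Set.mem_ofPred_eq]
  exact and_congr_right fun hl => and_congr_left' <| forall₂_congr fun q hq =>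
    h q hq (hl.1 q (List.mem_of_mem_head? hq))

theorem colPartitions_congr (h : ∀ q, IsColPart q → (P q ↔ Q q)) :
    colPartitions P u v n = colPartitions Q u v n :=
  Set.ext fun _ => mem_colPartitions_congr fun q _ => h q

theorem cons_mem_colPartitions_iff {K : ℕ × Col} (hK : IsColPart K) {t : List (ℕ × Col)} :
    K :: t ∈ colPartitions P u v n ↔
      P K ∧ t ∈ colPartitions (CanFollow · K) (u - aCt [K]) (v - bCt [K]) (n - K.1) := by
  simp only [colPartitions, Set.mem_ofPred_eq, isColPartition_cons_iff, List.head?_cons,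
    Option.mem_def, Option.some.injEq, forall_eq', List.map_cons, List.sum_cons, aCt_cons K t,
    bCt_cons K t]
  push_cast
  constructor
  · rintro ⟨⟨-, ht, hfollow⟩, hPK, hsum, ha, hb⟩
    exact ⟨hPK, ht, hfollow, by omega, by omega, by omega⟩
  · rintro ⟨hPK, ht, hfollow, hsum, ha, hb⟩
    exact ⟨⟨hK, ht, hfollow⟩, hPK, by omega, by omega, by omega⟩

theorem colPartitions_or_eq {K : ℕ × Col} (hK : IsColPart K) :
    colPartitions (fun q => P q ∨ q = K) u v n =
      colPartitions P u v n ∪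
        List.cons K '' colPartitions (CanFollow · K) (u - aCt [K]) (v - bCt [K]) (n - K.1) := by
  ext (_ | ⟨p, t⟩)
  · simp [colPartitions]
  · by_cases hp : p = K
    · subst hp
      rw [Set.mem_union, List.cons_injective.mem_set_image, cons_mem_colPartitions_iff hK,
        cons_mem_colPartitions_iff hK]
      tauto
    · have hnot : p :: t ∉ List.cons K '' colPartitions (CanFollow · K)
          (u - aCt [K]) (v - bCt [K]) (n - K.1) := by
        rintro ⟨_, -, hKt⟩
        exact hp (List.cons_eq_cons.1 hKt).1.symm
      rw [Set.mem_union, or_iff_left hnot]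
      refine mem_colPartitions_congr fun q hq _ => ?_
      obtain rfl : q = p := by simpa [eq_comm] using hq
      simp [hp]

theorem ncard_colPartitions_or {K : ℕ × Col} (hK : IsColPart K) (hPK : ¬ P K) :
    (colPartitions (fun q => P q ∨ q = K) u v n).ncard =
      (colPartitions P u v n).ncard +
        (colPartitions (CanFollow · K) (u - aCt [K]) (v - bCt [K]) (n - K.1)).ncard := by
  rw [colPartitions_or_eq hK, Set.ncard_union_eq _ colPartitions_finite
    (colPartitions_finite.image _), Set.ncard_image_of_injective _ List.cons_injective]
  rw [Set.disjoint_right]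
  rintro _ ⟨t, -, rfl⟩ hKt
  exact hPK ((cons_mem_colPartitions_iff hK).1 hKt).1

end colPartitions

theorem dct_eq_ncard (K : ℕ × Col) (u v n : ℤ) :
    dct K u v n = (colPartitions (fun q => colPos q ≤ colPos K) u v n).ncard := by
  rw [← Nat.card_coe_set_eq]
  refine Nat.card_congr (Equiv.subtypeEquivRight fun l => ?_)
  rcases l with _ | ⟨p, t⟩
  · simp [colPartitions]
  · simp only [colPartitions, Set.mem_ofPred_eq, List.head?_cons, Option.mem_def,
      Option.some.injEq, forall_eq']
    exact and_congr_right fun hl => and_congr_left' (hl.forall_colPos_le_iff K)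

section recurrence

variable {k : ℕ} {q : ℕ × Col}

theorem isColPart_odd_aa (k : ℕ) : IsColPart (2 * k + 3, Col.aa) := by
  simp [IsColPart]

theorem isColPart_even_b (hk : 1 ≤ k) : IsColPart (2 * k, Col.b) := by
  simp [IsColPart]
  omega

theorem colPos_le_odd_aa_iff (hq : IsColPart q) :
    colPos q ≤ colPos (2 * k + 3, Col.aa) ↔
      colPos q ≤ colPos (2 * k + 2, Col.a) ∨ q = (2 * k + 3, Col.aa) := by
  obtain ⟨m, c⟩ := q
  cases c <;> simp [IsColPart, colPos] at hq ⊢ <;> omega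

theorem canFollow_odd_aa_iff (hk : 1 ≤ k) (hq : IsColPart q) :
    CanFollow q (2 * k + 3, Col.aa) ↔
      colPos q ≤ colPos (2 * k, Col.a) ∨ q = (2 * k, Col.b) := by
  obtain ⟨m, c⟩ := q
  cases c <;> simp [IsColPart, CanFollow, colMinGap_aa, colPos] at hq ⊢ <;> omega

theorem canFollow_even_b_iff (hk : 1 ≤ k) (hq : IsColPart q) :
    CanFollow q (2 * k, Col.b) ↔ colPos q ≤ colPos (2 * k - 1, Col.a) := by
  obtain ⟨m, c⟩ := q
  cases c <;> simp [IsColPart, CanFollow, colMinGap_b_of_even, colPos] at hq ⊢ <;> omega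

end recurrence

theorem recurrence_eqd7_general (u v k n : ℕ) (hk : 1 ≤ k) :
    dct (2*k+3, Col.aa) u v n =
      dct (2*k+2, Col.a) u v n +
      dct (2*k, Col.a) ((u : ℤ) - 2) (v : ℤ) ((n : ℤ) - (2*k+3)) +
      dct (2*k-1, Col.a) ((u : ℤ) - 2) ((v : ℤ) - 1) ((n : ℤ) - (4*k+3)) := by
  rw [dct_eq_ncard, colPartitions_congr fun _ => colPos_le_odd_aa_iff,
    ncard_colPartitions_or (isColPart_odd_aa k) (by simp [colPos]; omega),
    colPartitions_congr fun _ => canFollow_odd_aa_iff hk,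
    ncard_colPartitions_or (isColPart_even_b hk) (by simp [colPos]; omega),
    colPartitions_congr fun _ => canFollow_even_b_iff hk, dct_eq_ncard, dct_eq_ncard,
    dct_eq_ncard]
  have h_aa : aCt [(2 * k + 3, Col.aa)] = 2 ∧ bCt [(2 * k + 3, Col.aa)] = 0 := ⟨rfl, rfl⟩
  have h_b : aCt [(2 * k, Col.b)] = 0 ∧ bCt [(2 * k, Col.b)] = 1 := ⟨rfl, rfl⟩
  rw [h_aa.1, h_aa.2, h_b.1, h_b.2]
  push_cast
  ring_nf

/-- Recurrence (3.7): d_{(2k+3)_{a²}}(u,v,n) = d_{(2k+2)_a}(u,v,n)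
+ d_{(2k)_a}(u-2,v,n-2k-3) + d_{(2k-1)_a}(u-2,v-1,n-4k-3). -/
theorem recurrence_eqd7 (u v k n : ℕ) (hk : 1 ≤ k) (hn : 1 ≤ n) :
    dct (2*k+3, Col.aa) u v n =
      dct (2*k+2, Col.a) u v n +
      dct (2*k, Col.a) ((u : ℤ) - 2) (v : ℤ) ((n : ℤ) - (2*k+3)) +
      dct (2*k-1, Col.a) ((u : ℤ) - 2) ((v : ℤ) - 1) ((n : ℤ) - (4*k+3)) :=
  recurrence_eqd7_general u v k n hk
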